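/- Under the hypotheses that γ is twice differentiable and nonvanishing with γ² = (x+iy)², the Laplacian satisfies Δγ = (n-1)/γ. -/

import Mathlib

/-!
Write `zₖ = xₖ + i yₖ`. Differentiating `γ² = ∑ zⱼ²` in `xₖ` gives `γ ∂ₖγ = zₖ`, so
`γ² ∑ (∂ₖγ)² = ∑ zₖ² = γ²` and, as `γ ≠ 0`, `∑ (∂ₖγ)² = 1`. Differentiating `γ ∂ₖγ = zₖ` once more
in `xₖ` gives `γ ∂ₖ²γ + (∂ₖγ)² = 1`; summing over `k` yields `γ Δγ = n - 1`.
-/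

open Complex Finset Filter Topology

section ProductRule

variable {𝕜 E 𝔸 : Type*} [NontriviallyNormedField 𝕜] [NormedAddCommGroup E] [NormedSpace 𝕜 E]
  [NormedCommRing 𝔸] [NormedAlgebra 𝕜 𝔸]

theorem fderiv_apply_eq_of_mul_eventuallyEq {f g h : E → 𝔸} {x : E}
    (hf : DifferentiableAt 𝕜 f x) (hg : DifferentiableAt 𝕜 g x)
    (hfg : (fun x' => f x' * g x') =ᶠ[𝓝 x] h) (v : E) :
    f x * fderiv 𝕜 g x v + g x * fderiv 𝕜 f x v = fderiv 𝕜 h x v := by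
  rw [← hfg.fderiv_eq, fderiv_fun_mul hf hg]
  rfl

end ProductRule

theorem sum_sq_eq_one_of_mul_eq {ι K : Type*} [Fintype ι] [Field K] {g : K} {a z : ι → K}
    (hg : g ≠ 0) (hsq : g ^ 2 = ∑ k, z k ^ 2) (h : ∀ k, g * a k = z k) :
    ∑ k, a k ^ 2 = 1 := by
  refine mul_left_cancel₀ (pow_ne_zero 2 hg) ?_
  rw [mul_one, mul_sum]
  simp_rw [← mul_pow, h, hsq]

section Coordinates

variable {n : ℕ}

theorem hasFDerivAt_ofReal_apply_add (j : Fin n) (c : ℂ) (x : Fin n → ℝ) :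
    HasFDerivAt (fun x' : Fin n → ℝ => (x' j : ℂ) + c)
      (ofRealCLM.comp (ContinuousLinearMap.proj j)) x :=
  (ofRealCLM.hasFDerivAt.comp x (hasFDerivAt_apply j x)).add_const c

theorem fderiv_ofReal_apply_add_single (j k : Fin n) (c : ℂ) (x : Fin n → ℝ) :
    fderiv ℝ (fun x' : Fin n → ℝ => (x' j : ℂ) + c) x (Pi.single k 1) =
      if j = k then 1 else 0 := by
  rw [(hasFDerivAt_ofReal_apply_add j c x).fderiv]
  by_cases hjk : j = k <;> simp [hjk]

theorem fderiv_sum_sq_ofReal_apply_add_single (c : Fin n → ℂ) (x : Fin n → ℝ) (k : Fin n) :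
    fderiv ℝ (fun x' : Fin n → ℝ => ∑ j, ((x' j : ℂ) + c j) ^ 2) x (Pi.single k 1) =
      2 * ((x k : ℂ) + c k) := by
  have hd : ∀ j, DifferentiableAt ℝ (fun x' : Fin n → ℝ => (x' j : ℂ) + c j) x :=
    fun j => (hasFDerivAt_ofReal_apply_add j (c j) x).differentiableAt
  rw [fderiv_fun_sum (𝕜 := ℝ) (A := fun (j : Fin n) (x' : Fin n → ℝ) => ((x' j : ℂ) + c j) ^ 2)
    fun j _ => (hd j).pow 2]
  simp only [FunLike.coe_sum, Finset.sum_apply, fderiv_fun_pow _ (hd _),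
    FunLike.coe_smul, Pi.smul_apply, fderiv_ofReal_apply_add_single]
  simp [mul_add]

variable {γ : (Fin n → ℝ) → ℂ}

theorem mul_fderiv_single_eq_of_sq_eq_sum_sq {U : Set (Fin n → ℝ)} {y : Fin n → ℝ}
    (hU : IsOpen U) (hγ : DifferentiableOn ℝ γ U)
    (hsq : ∀ x ∈ U, γ x ^ 2 = ∑ k, ((x k : ℂ) + (y k : ℂ) * I) ^ 2) {x : Fin n → ℝ} (hx : x ∈ U)
    (k : Fin n) :
    γ x * fderiv ℝ γ x (Pi.single k 1) = (x k : ℂ) + (y k : ℂ) * I := by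
  have hγx := hγ.differentiableAt (hU.mem_nhds hx)
  have hsq_near : (fun x' => γ x' * γ x') =ᶠ[𝓝 x]
      fun x' => ∑ j, ((x' j : ℂ) + (y j : ℂ) * I) ^ 2 :=
    eventually_of_mem (hU.mem_nhds hx) fun x' hx' => (sq _).symm.trans (hsq x' hx')
  have h := fderiv_apply_eq_of_mul_eventuallyEq hγx hγx hsq_near (Pi.single k 1)
  rw [fderiv_sum_sq_ofReal_apply_add_single (fun j => (y j : ℂ) * I)] at h
  linear_combination h / 2

theorem mul_fderiv_fderiv_single_add_sq_eq_one {x : Fin n → ℝ} {k : Fin n} {c : ℂ}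
    (hγ : DifferentiableAt ℝ γ x)
    (hγ' : DifferentiableAt ℝ (fun x' => fderiv ℝ γ x' (Pi.single k 1)) x)
    (hmul : ∀ᶠ x' in 𝓝 x, γ x' * fderiv ℝ γ x' (Pi.single k 1) = (x' k : ℂ) + c) :
    γ x * fderiv ℝ (fun x' => fderiv ℝ γ x' (Pi.single k 1)) x (Pi.single k 1)
      + fderiv ℝ γ x (Pi.single k 1) ^ 2 = 1 := by
  have h := fderiv_apply_eq_of_mul_eventuallyEq hγ hγ' hmul (Pi.single k 1)
  rw [fderiv_ofReal_apply_add_single, if_pos rfl] at h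
  linear_combination h

end Coordinates

/-- If `γ` is twice differentiable, nonvanishing, with `γ² = (x+iy)²`, then
`Δγ = (n-1)/γ`. -/
theorem stmt7 (n : ℕ) (y : Fin n → ℝ) (U : Set (Fin n → ℝ)) (hU : IsOpen U)
    (γ : (Fin n → ℝ) → ℂ) (hγ : ContDiffOn ℝ 2 γ U)
    (hsq : ∀ x ∈ U, γ x ^ 2 = ∑ k, ((x k : ℂ) + (y k : ℂ) * Complex.I) ^ 2)
    (hne : ∀ x ∈ U, γ x ≠ 0) :
    ∀ x ∈ U,
      ∑ k, fderiv ℝ (fun x' => fderiv ℝ γ x' (Pi.single k 1)) x (Pi.single k 1)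
        = ((n : ℂ) - 1) / γ x := by
  intro x hx
  have hxU := hU.mem_nhds hx
  have hγ₁ : DifferentiableOn ℝ γ U := hγ.differentiableOn two_ne_zero
  have hDγ : DifferentiableAt ℝ (fderiv ℝ γ) x :=
    ((hγ.fderiv_of_isOpen (m := 1) hU le_rfl).differentiableOn one_ne_zero x hx).differentiableAt
      hxU
  have hmul := fun x' (hx' : x' ∈ U) => mul_fderiv_single_eq_of_sq_eq_sum_sq hU hγ₁ hsq hx'
  have hsecond : ∀ k : Fin n,
      γ x * fderiv ℝ (fun x' => fderiv ℝ γ x' (Pi.single k 1)) x (Pi.single k 1)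
        + fderiv ℝ γ x (Pi.single k 1) ^ 2 = 1 := fun k =>
    mul_fderiv_fderiv_single_add_sq_eq_one (hγ₁.differentiableAt hxU)
      (hDγ.clm_apply (differentiableAt_const _))
      (eventually_of_mem hxU fun x' hx' => hmul x' hx' k)
  have heikonal := sum_sq_eq_one_of_mul_eq (hne x hx) (hsq x hx) (hmul x hx)
  have hsum := sum_congr rfl fun k (_ : k ∈ univ) => hsecond k
  rw [sum_add_distrib, ← mul_sum, heikonal, sum_const, card_univ, Fintype.card_fin,
    nsmul_one] at hsum
  rw [eq_div_iff (hne x hx)]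
  linear_combination hsum
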